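/- arXiv:2504.16890 — 2 statements merged into one kernel-verified Lean document; each statement's English description precedes it below -/
import Mathlib

section
/- Under the assumptions ∬ c dμ dν < ∞ and c ≥ 0 lower semicontinuous, the function V : (0,∞) → [0,∞), V(Λ) = -2 log Z[Λ] + (1/Z[Λ])∫ Z₁[Λ] log Z₁[Λ] dμ + (1/Z[Λ])∫ Z₂[Λ] log Z₂[Λ] dν, is continuous. -/
open MeasureTheory Real

section Stmt12Aux

variable {α β : Type*} [MeasurableSpace α] [MeasurableSpace β]

private lemma stmt12_exp_cont (f : ℝ) {Λ₀ : ℝ} (h : Λ₀ ≠ 0) :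
    ContinuousAt (fun Λ : ℝ => Real.exp (-f / Λ)) Λ₀ :=
  Real.continuous_exp.continuousAt.comp (ContinuousAt.div continuousAt_const continuousAt_id h)

private lemma stmt12_exp_le_one {f Λ : ℝ} (hf : 0 ≤ f) (hΛ : 0 < Λ) :
    Real.exp (-f / Λ) ≤ 1 :=
  Real.exp_le_one_iff.mpr (div_nonpos_iff.mpr (Or.inr ⟨neg_nonpos.mpr hf, hΛ.le⟩))

private lemma stmt12_integrable_exp (μ : Measure α) [IsProbabilityMeasure μ]
    {f : α → ℝ} (hf : Measurable f) (hnn : ∀ a, 0 ≤ f a) {Λ : ℝ} (hΛ : 0 < Λ) :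
    Integrable (fun a => Real.exp (-f a / Λ)) μ := by
  refine Integrable.mono' (integrable_const 1)
    ((Real.measurable_exp.comp ((hf.neg).div_const Λ)).aestronglyMeasurable) ?_
  filter_upwards with a
  rw [Real.norm_eq_abs, abs_of_pos (Real.exp_pos _)]
  exact stmt12_exp_le_one (hnn a) hΛ

private lemma stmt12_int_exp_pos (μ : Measure α) [IsProbabilityMeasure μ]
    {f : α → ℝ} (hf : Measurable f) (hnn : ∀ a, 0 ≤ f a) {Λ : ℝ} (hΛ : 0 < Λ) :
    0 < ∫ a, Real.exp (-f a / Λ) ∂μ := by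
  rw [integral_pos_iff_support_of_nonneg (fun a => (Real.exp_pos _).le)
    (stmt12_integrable_exp μ hf hnn hΛ)]
  have h : Function.support (fun a => Real.exp (-f a / Λ)) = Set.univ := by
    ext a; simp [Function.mem_support, (Real.exp_pos _).ne']
  rw [h]; simp

private lemma stmt12_int_exp_le_one (μ : Measure α) [IsProbabilityMeasure μ]
    {f : α → ℝ} (hf : Measurable f) (hnn : ∀ a, 0 ≤ f a) {Λ : ℝ} (hΛ : 0 < Λ) :
    ∫ a, Real.exp (-f a / Λ) ∂μ ≤ 1 := by
  calc ∫ a, Real.exp (-f a / Λ) ∂μ ≤ ∫ _, (1:ℝ) ∂μ :=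
        integral_mono (stmt12_integrable_exp μ hf hnn hΛ) (integrable_const 1)
          (fun a => stmt12_exp_le_one (hnn a) hΛ)
    _ = 1 := by simp

/-- Continuity at `Λ₀ > 0` of the inner integral `Λ ↦ ∫ exp(-k(a,b)/Λ) dν`. -/
private lemma stmt12_G_cont (ν : Measure β) [IsProbabilityMeasure ν]
    {k : α × β → ℝ} (hk : Measurable k) (hnn : ∀ z, 0 ≤ k z) {Λ₀ : ℝ} (hΛ₀ : 0 < Λ₀)
    (a : α) :
    ContinuousAt (fun Λ => ∫ b, Real.exp (-k (a, b) / Λ) ∂ν) Λ₀ := by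
  apply continuousAt_of_dominated (bound := fun _ => (1:ℝ))
  · filter_upwards with Λ
    exact (Real.measurable_exp.comp
      (((hk.comp measurable_prodMk_left).neg).div_const Λ)).aestronglyMeasurable
  · filter_upwards [Ioi_mem_nhds hΛ₀] with Λ hΛ
    filter_upwards with b
    rw [Real.norm_eq_abs, abs_of_pos (Real.exp_pos _)]
    exact stmt12_exp_le_one (hnn _) hΛ
  · exact integrable_const 1
  · filter_upwards with b
    exact stmt12_exp_cont _ hΛ₀.ne'

/-- Continuity at `Λ₀ > 0` of `Λ ↦ ∫ G Λ a * log (G Λ a) dμ` where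
`G Λ a = ∫ exp(-k(a,b)/Λ) dν`. -/
private lemma stmt12_key (μ : Measure α) (ν : Measure β)
    [IsProbabilityMeasure μ] [IsProbabilityMeasure ν]
    {k : α × β → ℝ} (hk : Measurable k) (hnn : ∀ z, 0 ≤ k z) {Λ₀ : ℝ} (hΛ₀ : 0 < Λ₀) :
    ContinuousAt (fun Λ => ∫ a, (∫ b, Real.exp (-k (a, b) / Λ) ∂ν) *
      Real.log (∫ b, Real.exp (-k (a, b) / Λ) ∂ν) ∂μ) Λ₀ := by
  have hGmeas : ∀ Λ : ℝ, AEStronglyMeasurable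
      (fun a => ∫ b, Real.exp (-k (a, b) / Λ) ∂ν) μ := by
    intro Λ
    exact ((Real.measurable_exp.comp ((hk.neg).div_const Λ)).stronglyMeasurable.integral_prod_right').aestronglyMeasurable
  have hGpos : ∀ {Λ : ℝ}, 0 < Λ → ∀ a, 0 < ∫ b, Real.exp (-k (a, b) / Λ) ∂ν := by
    intro Λ hΛ a
    exact stmt12_int_exp_pos ν (hk.comp measurable_prodMk_left) (fun b => hnn _) hΛ
  have hGle : ∀ {Λ : ℝ}, 0 < Λ → ∀ a, (∫ b, Real.exp (-k (a, b) / Λ) ∂ν) ≤ 1 := by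
    intro Λ hΛ a
    exact stmt12_int_exp_le_one ν (hk.comp measurable_prodMk_left) (fun b => hnn _) hΛ
  apply continuousAt_of_dominated (bound := fun _ => (1:ℝ))
  · filter_upwards with Λ
    exact (hGmeas Λ).mul ((Real.measurable_log.comp_aemeasurable
      (hGmeas Λ).aemeasurable).aestronglyMeasurable)
  · filter_upwards [Ioi_mem_nhds hΛ₀] with Λ hΛ
    filter_upwards with a
    rw [Real.norm_eq_abs, mul_comm]
    exact (Real.abs_log_mul_self_lt _ (hGpos hΛ a) (hGle hΛ a)).le
  · exact integrable_const 1
  · filter_upwards with a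
    have h1 : ContinuousAt (fun t : ℝ => t * Real.log t)
        (∫ b, Real.exp (-k (a, b) / Λ₀) ∂ν) :=
      continuousAt_id.mul (Real.continuousAt_log (hGpos hΛ₀ a).ne')
    exact ContinuousAt.comp (g := fun t : ℝ => t * Real.log t)
      (f := fun Λ => ∫ b, Real.exp (-k (a, b) / Λ) ∂ν) h1 (stmt12_G_cont ν hk hnn hΛ₀ a)

end Stmt12Aux

/-- Under `∬ c dμ dν < ∞` and `c ≥ 0` lower semicontinuous, the function
`V(Λ) = -2 log Z[Λ] + (1/Z[Λ])∫ Z₁[Λ] log Z₁[Λ] dμ + (1/Z[Λ])∫ Z₂[Λ] log Z₂[Λ] dν`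
is continuous on `(0,∞)`. -/
theorem stmt_12 {dx dy : ℕ}
    (c : EuclideanSpace ℝ (Fin dx) × EuclideanSpace ℝ (Fin dy) → ℝ)
    (hc_nonneg : ∀ z, 0 ≤ c z) (hc_lsc : LowerSemicontinuous c)
    (μ : Measure (EuclideanSpace ℝ (Fin dx))) (ν : Measure (EuclideanSpace ℝ (Fin dy)))
    [IsProbabilityMeasure μ] [IsProbabilityMeasure ν]
    (hint : Integrable c (μ.prod ν))
    (Z : ℝ → ℝ) (Z₁ : ℝ → EuclideanSpace ℝ (Fin dx) → ℝ)
    (Z₂ : ℝ → EuclideanSpace ℝ (Fin dy) → ℝ)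
    (hZ : ∀ Λ > (0:ℝ), Z Λ = ∫ z, Real.exp (-c z / Λ) ∂(μ.prod ν))
    (hZ₁ : ∀ Λ > (0:ℝ), ∀ x, Z₁ Λ x = ∫ y, Real.exp (-c (x, y) / Λ) ∂ν)
    (hZ₂ : ∀ Λ > (0:ℝ), ∀ y, Z₂ Λ y = ∫ x, Real.exp (-c (x, y) / Λ) ∂μ)
    (V : ℝ → ℝ)
    (hV : ∀ Λ > (0:ℝ), V Λ = -2 * Real.log (Z Λ) +
      (1 / Z Λ) * (∫ x, Z₁ Λ x * Real.log (Z₁ Λ x) ∂μ) +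
      (1 / Z Λ) * ∫ y, Z₂ Λ y * Real.log (Z₂ Λ y) ∂ν) :
    ContinuousOn V (Set.Ioi 0) := by
  have hc_meas : Measurable c := hc_lsc.measurable
  set F₀ : ℝ → ℝ := fun Λ => ∫ z, Real.exp (-c z / Λ) ∂(μ.prod ν) with hF₀
  set F₁ : ℝ → ℝ := fun Λ => ∫ x, (∫ y, Real.exp (-c (x, y) / Λ) ∂ν) *
      Real.log (∫ y, Real.exp (-c (x, y) / Λ) ∂ν) ∂μ with hF₁
  set F₂ : ℝ → ℝ := fun Λ => ∫ y, (∫ x, Real.exp (-c (x, y) / Λ) ∂μ) *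
      Real.log (∫ x, Real.exp (-c (x, y) / Λ) ∂μ) ∂ν with hF₂
  have hW : ContinuousOn (fun Λ => -2 * Real.log (F₀ Λ) + (1 / F₀ Λ) * F₁ Λ +
      (1 / F₀ Λ) * F₂ Λ) (Set.Ioi 0) := by
    intro Λ₀ hΛ₀
    rw [Set.mem_Ioi] at hΛ₀
    have hA : ContinuousAt F₀ Λ₀ := by
      apply continuousAt_of_dominated (bound := fun _ => (1:ℝ))
      · filter_upwards with Λ
        exact (Real.measurable_exp.comp ((hc_meas.neg).div_const Λ)).aestronglyMeasurable
      · filter_upwards [Ioi_mem_nhds hΛ₀] with Λ hΛ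
        filter_upwards with z
        rw [Real.norm_eq_abs, abs_of_pos (Real.exp_pos _)]
        exact stmt12_exp_le_one (hc_nonneg z) hΛ
      · exact integrable_const 1
      · filter_upwards with z
        exact stmt12_exp_cont _ hΛ₀.ne'
    have hApos : 0 < F₀ Λ₀ := stmt12_int_exp_pos (μ.prod ν) hc_meas hc_nonneg hΛ₀
    have hB : ContinuousAt F₁ Λ₀ := stmt12_key μ ν hc_meas hc_nonneg hΛ₀
    have hC : ContinuousAt F₂ Λ₀ := by
      have := stmt12_key ν μ (k := fun z => c (z.2, z.1))
        (hc_meas.comp measurable_swap) (fun z => hc_nonneg _) hΛ₀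
      exact this
    exact (((continuousAt_const.mul ((Real.continuousAt_log hApos.ne').comp hA)).add
      ((continuousAt_const.div hA hApos.ne').mul hB)).add
      ((continuousAt_const.div hA hApos.ne').mul hC)).continuousWithinAt
  apply hW.congr
  intro Λ hΛ
  rw [Set.mem_Ioi] at hΛ
  rw [hV Λ hΛ, hZ Λ hΛ]
  have e1 : (∫ x, Z₁ Λ x * Real.log (Z₁ Λ x) ∂μ) = F₁ Λ := by
    apply integral_congr_ae
    filter_upwards with x
    rw [hZ₁ Λ hΛ x]
  have e2 : (∫ y, Z₂ Λ y * Real.log (Z₂ Λ y) ∂ν) = F₂ Λ := by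
    apply integral_congr_ae
    filter_upwards with y
    rw [hZ₂ Λ hΛ y]
  rw [e1, e2]
end

section
/- With σ[Λ](x,y) = (1/Z[Λ]) e^{-c(x,y)/Λ} μ(x)ν(y), the function V can be written as V(Λ) = -2 log Z[Λ] + E_σ[log(Z₁ Z₂)], and its derivative satisfies dV/dΛ = (1/Λ²)·Cov_σ(c, log(Z₁Z₂)) = (1/Λ²)(E_σ[c·log(Z₁Z₂)] - E_σ[c]·E_σ[log(Z₁Z₂)]). -/
open MeasureTheory

open Real Filter Set Topology

/-! `Z`, `Z₁`, `Z₂` are integrals of `e^{-c/Λ}`; since `c ≥ 0` is integrable they can be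
differentiated under the integral sign, `∂_Λ e^{-c/Λ} = c e^{-c/Λ} / Λ²` being dominated by
`4 c / Λ₀²` for `Λ > Λ₀ / 2`. For `∫ Z₁ log Z₁ dμ` one differentiates `t log t` and dominates
`(log Z₁ + 1) Z₁'` using `c e^{-c/Λ} ≤ Λ / e` and Jensen's inequality
`-∫ c(x, ·) dν / Λ ≤ log Z₁(x) ≤ 0`. Fubini turns `∫ Z₁ log Z₁ dμ` into
`∫ e^{-c/Λ} log Z₁ d(μ ⊗ ν) = Z · E_σ[log Z₁]`, which is the first identity, and the quotient rule
then yields the covariance: the two terms `Z' = ∫ c e^{-c/Λ} / Λ²` produced by the `+ 1` in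
`(t log t)' = log t + 1` cancel against the derivative of `-2 log Z`. -/

lemma norm_exp_neg_div_le_one {s Λ : ℝ} (hs : 0 ≤ s) (hΛ : 0 ≤ Λ) : ‖exp (-s / Λ)‖ ≤ 1 := by
  rw [norm_of_nonneg (exp_pos _).le]
  exact exp_le_one_iff.2 (div_nonpos_of_nonpos_of_nonneg (neg_nonpos.2 hs) hΛ)

lemma norm_mul_exp_neg_div_le {s Λ : ℝ} (hs : 0 ≤ s) (hΛ : 0 < Λ) :
    ‖s * exp (-s / Λ)‖ ≤ Λ * exp (-1) := by
  rw [norm_of_nonneg (mul_nonneg hs (exp_pos _).le)]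
  calc s * exp (-s / Λ) = Λ * (s / Λ * exp (-(s / Λ))) := by field_simp
    _ ≤ Λ * exp (-1) := by gcongr; exact mul_exp_neg_le_exp_neg_one _

lemma hasDerivAt_exp_neg_div (s : ℝ) {Λ : ℝ} (hΛ : Λ ≠ 0) :
    HasDerivAt (fun Λ => exp (-s / Λ)) (s * exp (-s / Λ) / Λ ^ 2) Λ := by
  convert (((hasDerivAt_inv hΛ).const_mul (-s)).exp) using 1
  · ext Λ; rw [div_eq_mul_inv]
  · field_simp

noncomputable def partitionFn {α : Type*} [MeasurableSpace α] (m : Measure α) (f : α → ℝ)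
    (Λ : ℝ) : ℝ :=
  ∫ a, exp (-f a / Λ) ∂m

section PartitionFn

variable {α : Type*} [MeasurableSpace α] {m : Measure α} {f : α → ℝ} {Λ : ℝ}

lemma integrable_exp_neg_div [IsFiniteMeasure m] (hf : Measurable f) (hf0 : ∀ a, 0 ≤ f a)
    (hΛ : 0 ≤ Λ) : Integrable (fun a => exp (-f a / Λ)) m :=
  (integrable_const 1).mono' (hf.neg.div_const Λ).exp.aestronglyMeasurable
    (ae_of_all _ fun a => norm_exp_neg_div_le_one (hf0 a) hΛ)

lemma partitionFn_pos [IsFiniteMeasure m] [NeZero m] (hf : Measurable f) (hf0 : ∀ a, 0 ≤ f a)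
    (hΛ : 0 ≤ Λ) : 0 < partitionFn m f Λ :=
  integral_exp_pos (integrable_exp_neg_div hf hf0 hΛ)

lemma partitionFn_le_one [IsProbabilityMeasure m] (hf0 : ∀ a, 0 ≤ f a) (hΛ : 0 ≤ Λ) :
    partitionFn m f Λ ≤ 1 := by
  unfold partitionFn
  refine (Real.le_norm_self _).trans
    ((norm_integral_le_of_norm_le_const (C := 1) ?_).trans_eq ?_)
  · exact ae_of_all _ fun a => norm_exp_neg_div_le_one (hf0 a) hΛ
  · simp

lemma neg_integral_div_le_log_partitionFn [IsProbabilityMeasure m] (hf : Measurable f)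
    (hf0 : ∀ a, 0 ≤ f a) (hfi : Integrable f m) (hΛ : 0 < Λ) :
    -(∫ a, f a ∂m) / Λ ≤ log (partitionFn m f Λ) := by
  rw [le_log_iff_exp_le (partitionFn_pos hf hf0 hΛ.le), ← integral_neg, ← integral_div]
  exact convexOn_exp.map_integral_le continuous_exp.continuousOn isClosed_univ
    (ae_of_all _ fun _ => mem_univ _) (hfi.neg.div_const Λ) (integrable_exp_neg_div hf hf0 hΛ.le)

lemma abs_log_partitionFn_le [IsProbabilityMeasure m] (hf : Measurable f) (hf0 : ∀ a, 0 ≤ f a)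
    (hfi : Integrable f m) (hΛ : 0 < Λ) : |log (partitionFn m f Λ)| ≤ (∫ a, f a ∂m) / Λ := by
  refine abs_le.2 ⟨?_, ?_⟩
  · rw [← neg_div]; exact neg_integral_div_le_log_partitionFn hf hf0 hfi hΛ
  · exact (log_nonpos (partitionFn_pos hf hf0 hΛ.le).le (partitionFn_le_one hf0 hΛ.le)).trans
      (div_nonneg (integral_nonneg hf0) hΛ.le)

lemma integrable_mul_exp_neg_div (hf : Measurable f) (hf0 : ∀ a, 0 ≤ f a) (hfi : Integrable f m)
    (hΛ : 0 ≤ Λ) : Integrable (fun a => f a * exp (-f a / Λ)) m :=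
  hfi.mul_bdd (hf.neg.div_const Λ).exp.aestronglyMeasurable
    (ae_of_all _ fun a => norm_exp_neg_div_le_one (hf0 a) hΛ)

lemma integral_mul_exp_neg_div_le [IsProbabilityMeasure m] (hf0 : ∀ a, 0 ≤ f a) (hΛ : 0 < Λ) :
    ∫ a, f a * exp (-f a / Λ) ∂m ≤ Λ * exp (-1) := by
  refine (Real.le_norm_self _).trans
    ((norm_integral_le_of_norm_le_const (C := Λ * exp (-1)) ?_).trans_eq ?_)
  · exact ae_of_all _ fun a => norm_mul_exp_neg_div_le (hf0 a) hΛ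
  · simp

lemma hasDerivAt_partitionFn [IsFiniteMeasure m] (hf : Measurable f) (hf0 : ∀ a, 0 ≤ f a)
    (hfi : Integrable f m) (hΛ : 0 < Λ) :
    HasDerivAt (partitionFn m f) ((∫ a, f a * exp (-f a / Λ) ∂m) / Λ ^ 2) Λ := by
  have hbound : ∀ᵐ a ∂m, ∀ Λ' ∈ Ioi (Λ / 2),
      ‖f a * exp (-f a / Λ') / Λ' ^ 2‖ ≤ f a * (4 / Λ ^ 2) := by
    refine ae_of_all _ fun a Λ' (hΛ' : Λ / 2 < Λ') => ?_
    have hΛ'0 : 0 < Λ' := (half_pos hΛ).trans hΛ'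
    have h4 : 1 / Λ' ^ 2 ≤ 4 / Λ ^ 2 := by
      rw [div_le_div_iff₀ (by positivity) (by positivity)]; nlinarith
    rw [norm_of_nonneg (by have := hf0 a; positivity), div_eq_mul_one_div]
    gcongr
    · exact hf0 a
    · exact mul_le_of_le_one_right (hf0 a)
        ((Real.le_norm_self _).trans (norm_exp_neg_div_le_one (hf0 a) hΛ'0.le))
  rw [← integral_div]
  exact (hasDerivAt_integral_of_dominated_loc_of_deriv_le (Ioi_mem_nhds (half_lt_self hΛ))
    (Eventually.of_forall fun Λ' => (hf.neg.div_const Λ').exp.aestronglyMeasurable)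
    (integrable_exp_neg_div hf hf0 hΛ.le)
    ((hf.mul (hf.neg.div_const Λ).exp).div_const _).aestronglyMeasurable hbound
    (hfi.mul_const _)
    (ae_of_all _ fun a Λ' (hΛ' : Λ / 2 < Λ') =>
      hasDerivAt_exp_neg_div (f a) ((half_pos hΛ).trans hΛ').ne')).2

lemma hasDerivAt_partitionFn_mul_log [IsProbabilityMeasure m] (hf : Measurable f)
    (hf0 : ∀ a, 0 ≤ f a) (hfi : Integrable f m) (hΛ : 0 < Λ) :
    HasDerivAt (fun Λ => partitionFn m f Λ * log (partitionFn m f Λ))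
      ((log (partitionFn m f Λ) + 1) * ((∫ a, f a * exp (-f a / Λ) ∂m) / Λ ^ 2)) Λ :=
  (hasDerivAt_mul_log (partitionFn_pos hf hf0 hΛ.le).ne').comp Λ
    (hasDerivAt_partitionFn hf hf0 hfi hΛ)

lemma abs_deriv_partitionFn_mul_log_le [IsProbabilityMeasure m] (hf : Measurable f)
    (hf0 : ∀ a, 0 ≤ f a) (hfi : Integrable f m) {Λ₀ : ℝ} (hΛ₀ : 0 < Λ₀) (hΛ : Λ₀ / 2 < Λ) :
    |(log (partitionFn m f Λ) + 1) * ((∫ a, f a * exp (-f a / Λ) ∂m) / Λ ^ 2)| ≤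
      (2 / Λ₀ * ∫ a, f a ∂m + 1) * (2 * exp (-1) / Λ₀) := by
  have hΛ0 : 0 < Λ := (half_pos hΛ₀).trans hΛ
  have hinv : 1 / Λ ≤ 2 / Λ₀ := by
    rw [div_le_div_iff₀ hΛ0 hΛ₀]; linarith
  have hlog : |log (partitionFn m f Λ) + 1| ≤ 2 / Λ₀ * ∫ a, f a ∂m + 1 :=
    calc |log (partitionFn m f Λ) + 1| ≤ (∫ a, f a ∂m) / Λ + 1 :=
          (abs_add_le _ _).trans (by simpa using abs_log_partitionFn_le hf hf0 hfi hΛ0)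
      _ = 1 / Λ * ∫ a, f a ∂m + 1 := by ring
      _ ≤ 2 / Λ₀ * ∫ a, f a ∂m + 1 := by gcongr; exact integral_nonneg hf0
  have hderiv : |(∫ a, f a * exp (-f a / Λ) ∂m) / Λ ^ 2| ≤ 2 * exp (-1) / Λ₀ :=
    calc |(∫ a, f a * exp (-f a / Λ) ∂m) / Λ ^ 2| ≤ Λ * exp (-1) / Λ ^ 2 := by
          rw [abs_of_nonneg (div_nonneg (integral_nonneg fun a =>
            mul_nonneg (hf0 a) (exp_pos _).le) (sq_nonneg _))]
          gcongr; exact integral_mul_exp_neg_div_le hf0 hΛ0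
      _ = 1 / Λ * exp (-1) := by field_simp
      _ ≤ 2 / Λ₀ * exp (-1) := by gcongr
      _ = 2 * exp (-1) / Λ₀ := by ring
  have hint : 0 ≤ ∫ a, f a ∂m := integral_nonneg hf0
  rw [abs_mul]
  exact mul_le_mul hlog hderiv (abs_nonneg _) (by positivity)

end PartitionFn

section Product

variable {α β : Type*} [MeasurableSpace α] [MeasurableSpace β] {μ : Measure α} {ν : Measure β}
  {c : α × β → ℝ} {Λ : ℝ}

lemma integral_prod_mul_comp_fst [SFinite μ] [SFinite ν] {F : α × β → ℝ} {h : α → ℝ}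
    (hFh : Integrable (fun z => F z * h z.1) (μ.prod ν)) :
    ∫ z, F z * h z.1 ∂(μ.prod ν) = ∫ x, (∫ y, F (x, y) ∂ν) * h x ∂μ := by
  simp_rw [integral_prod _ hFh, integral_mul_const]

lemma measurable_partitionFn_section [SFinite ν] (hc : Measurable c) (Λ : ℝ) :
    Measurable fun x => partitionFn ν (fun y => c (x, y)) Λ :=
  (hc.neg.div_const Λ).exp.stronglyMeasurable.integral_prod_right'.measurable

lemma integrable_log_partitionFn_section [SFinite μ] [IsProbabilityMeasure ν] (hc : Measurable c)
    (hc0 : ∀ z, 0 ≤ c z) (hci : Integrable c (μ.prod ν)) (hΛ : 0 < Λ) :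
    Integrable (fun x => log (partitionFn ν (fun y => c (x, y)) Λ)) μ :=
  (hci.integral_prod_left.div_const Λ).mono'
    (measurable_partitionFn_section hc Λ).log.aestronglyMeasurable
    (by
      filter_upwards [hci.prod_right_ae] with x hx
      exact abs_log_partitionFn_le (hc.comp measurable_prodMk_left) (fun y => hc0 _) hx hΛ)

lemma integrable_mul_log_partitionFn_fst [SFinite μ] [IsProbabilityMeasure ν] (hc : Measurable c)
    (hc0 : ∀ z, 0 ≤ c z) (hci : Integrable c (μ.prod ν)) (hΛ : 0 < Λ) {w : α × β → ℝ} {K : ℝ}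
    (hw : Measurable w) (hwK : ∀ z, ‖w z‖ ≤ K) :
    Integrable (fun z => w z * log (partitionFn ν (fun y => c (z.1, y)) Λ)) (μ.prod ν) :=
  ((integrable_log_partitionFn_section hc hc0 hci hΛ).comp_fst ν).bdd_mul hw.aestronglyMeasurable
    (ae_of_all _ hwK)

lemma integral_partitionFn_mul_log_eq [SFinite μ] [IsProbabilityMeasure ν] (hc : Measurable c)
    (hc0 : ∀ z, 0 ≤ c z) (hci : Integrable c (μ.prod ν)) (hΛ : 0 < Λ) :
    ∫ x, partitionFn ν (fun y => c (x, y)) Λ * log (partitionFn ν (fun y => c (x, y)) Λ) ∂μ =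
      ∫ z, exp (-c z / Λ) * log (partitionFn ν (fun y => c (z.1, y)) Λ) ∂(μ.prod ν) :=
  (integral_prod_mul_comp_fst (F := fun z => exp (-c z / Λ))
    (h := fun x => log (partitionFn ν (fun y => c (x, y)) Λ))
    (integrable_mul_log_partitionFn_fst hc hc0 hci hΛ
    (hc.neg.div_const Λ).exp (K := 1) fun z => norm_exp_neg_div_le_one (hc0 z) hΛ.le)).symm

lemma hasDerivAt_integral_partitionFn_mul_log' [IsProbabilityMeasure μ] [IsProbabilityMeasure ν]
    (hc : Measurable c) (hc0 : ∀ z, 0 ≤ c z) (hci : Integrable c (μ.prod ν)) (hΛ : 0 < Λ) :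
    HasDerivAt (fun Λ => ∫ x, partitionFn ν (fun y => c (x, y)) Λ *
        log (partitionFn ν (fun y => c (x, y)) Λ) ∂μ)
      (∫ x, (log (partitionFn ν (fun y => c (x, y)) Λ) + 1) *
        ((∫ y, c (x, y) * exp (-c (x, y) / Λ) ∂ν) / Λ ^ 2) ∂μ) Λ := by
  have hsec : ∀ x, Measurable fun y => c (x, y) := fun x => hc.comp measurable_prodMk_left
  have hZ₁ := measurable_partitionFn_section (ν := ν) hc
  have hZ₁_le : ∀ x, ‖partitionFn ν (fun y => c (x, y)) Λ‖ ≤ 1 := fun x => by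
    rw [norm_of_nonneg (partitionFn_pos (hsec x) (fun y => hc0 _) hΛ.le).le]
    exact partitionFn_le_one (fun y => hc0 _) hΛ.le
  have hderiv_meas : Measurable fun x => ∫ y, c (x, y) * exp (-c (x, y) / Λ) ∂ν :=
    (hc.mul (hc.neg.div_const Λ).exp).stronglyMeasurable.integral_prod_right'.measurable
  exact (hasDerivAt_integral_of_dominated_loc_of_deriv_le
    (bound := fun x => (2 / Λ * ∫ y, c (x, y) ∂ν + 1) * (2 * exp (-1) / Λ))
    (Ioi_mem_nhds (half_lt_self hΛ))
    (Eventually.of_forall fun Λ' => ((hZ₁ Λ').mul (hZ₁ Λ').log).aestronglyMeasurable)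
    ((integrable_log_partitionFn_section hc hc0 hci hΛ).bdd_mul (hZ₁ Λ).aestronglyMeasurable
      (ae_of_all _ hZ₁_le))
    (((hZ₁ Λ).log.add_const 1).mul (hderiv_meas.div_const _)).aestronglyMeasurable
    (by
      filter_upwards [hci.prod_right_ae] with x hx Λ' hΛ'
      exact abs_deriv_partitionFn_mul_log_le (hsec x) (fun y => hc0 _) hx hΛ hΛ')
    (((hci.integral_prod_left.const_mul _).add (integrable_const 1)).mul_const _)
    (by
      filter_upwards [hci.prod_right_ae] with x hx Λ' hΛ'
      exact hasDerivAt_partitionFn_mul_log (hsec x) (fun y => hc0 _) hx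
        ((half_pos hΛ).trans hΛ'))).2

lemma hasDerivAt_integral_partitionFn_mul_log [IsProbabilityMeasure μ] [IsProbabilityMeasure ν]
    (hc : Measurable c) (hc0 : ∀ z, 0 ≤ c z) (hci : Integrable c (μ.prod ν)) (hΛ : 0 < Λ) :
    HasDerivAt (fun Λ => ∫ x, partitionFn ν (fun y => c (x, y)) Λ *
        log (partitionFn ν (fun y => c (x, y)) Λ) ∂μ)
      ((∫ z, c z * exp (-c z / Λ) * log (partitionFn ν (fun y => c (z.1, y)) Λ) ∂(μ.prod ν) +
        ∫ z, c z * exp (-c z / Λ) ∂(μ.prod ν)) / Λ ^ 2) Λ := by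
  refine (hasDerivAt_integral_partitionFn_mul_log' hc hc0 hci hΛ).congr_deriv ?_
  have hB := integrable_mul_log_partitionFn_fst hc hc0 hci hΛ
    (w := fun z => c z * exp (-c z / Λ)) (hc.mul (hc.neg.div_const Λ).exp)
    fun z => norm_mul_exp_neg_div_le (hc0 z) hΛ
  have hA := integrable_mul_exp_neg_div hc hc0 hci hΛ.le
  have hBA : Integrable (fun z => (c z * exp (-c z / Λ) *
      log (partitionFn ν (fun y => c (z.1, y)) Λ) + c z * exp (-c z / Λ)) / Λ ^ 2) (μ.prod ν) :=
    (hB.add hA).div_const _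
  rw [← integral_add hB hA, ← integral_div, integral_prod _ hBA]
  refine integral_congr_ae (ae_of_all _ fun x => ?_)
  simp only [← integral_div, ← integral_const_mul]
  congr 1; ext y; ring

lemma integrable_mul_log_partitionFn_snd [IsProbabilityMeasure μ] [SFinite ν] (hc : Measurable c)
    (hc0 : ∀ z, 0 ≤ c z) (hci : Integrable c (μ.prod ν)) (hΛ : 0 < Λ) {w : α × β → ℝ} {K : ℝ}
    (hw : Measurable w) (hwK : ∀ z, ‖w z‖ ≤ K) :
    Integrable (fun z => w z * log (partitionFn μ (fun x => c (x, z.2)) Λ)) (μ.prod ν) :=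
  (integrable_mul_log_partitionFn_fst (c := fun z => c z.swap) (hc.comp measurable_swap)
    (fun _ => hc0 _) hci.swap hΛ (hw.comp measurable_swap) fun _ => hwK _).swap

lemma integral_partitionFn_mul_log_eq_snd [IsProbabilityMeasure μ] [SFinite ν] (hc : Measurable c)
    (hc0 : ∀ z, 0 ≤ c z) (hci : Integrable c (μ.prod ν)) (hΛ : 0 < Λ) :
    ∫ y, partitionFn μ (fun x => c (x, y)) Λ * log (partitionFn μ (fun x => c (x, y)) Λ) ∂ν =
      ∫ z, exp (-c z / Λ) * log (partitionFn μ (fun x => c (x, z.2)) Λ) ∂(μ.prod ν) :=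
  (integral_partitionFn_mul_log_eq (c := fun z => c z.swap) (hc.comp measurable_swap)
    (fun _ => hc0 _) hci.swap hΛ).trans
    (integral_prod_swap fun z => exp (-c z / Λ) * log (partitionFn μ (fun x => c (x, z.2)) Λ))

lemma hasDerivAt_integral_partitionFn_mul_log_snd [IsProbabilityMeasure μ]
    [IsProbabilityMeasure ν] (hc : Measurable c) (hc0 : ∀ z, 0 ≤ c z)
    (hci : Integrable c (μ.prod ν)) (hΛ : 0 < Λ) :
    HasDerivAt (fun Λ => ∫ y, partitionFn μ (fun x => c (x, y)) Λ *
        log (partitionFn μ (fun x => c (x, y)) Λ) ∂ν)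
      ((∫ z, c z * exp (-c z / Λ) * log (partitionFn μ (fun x => c (x, z.2)) Λ) ∂(μ.prod ν) +
        ∫ z, c z * exp (-c z / Λ) ∂(μ.prod ν)) / Λ ^ 2) Λ := by
  have := hasDerivAt_integral_partitionFn_mul_log (c := fun z => c z.swap)
    (hc.comp measurable_swap) (fun _ => hc0 _) hci.swap hΛ
  rw [← integral_prod_swap (μ := μ) (ν := ν), ← integral_prod_swap (μ := μ) (ν := ν)]
  exact this

end Product

noncomputable def gibbsMeasure {α : Type*} [MeasurableSpace α] (m : Measure α) (f : α → ℝ)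
    (Λ : ℝ) : Measure α :=
  m.withDensity fun a => ENNReal.ofReal (exp (-f a / Λ) / partitionFn m f Λ)

lemma integral_gibbsMeasure {α : Type*} [MeasurableSpace α] {m : Measure α} {f : α → ℝ} {Λ : ℝ}
    (hf : Measurable f) (g : α → ℝ) :
    ∫ a, g a ∂(gibbsMeasure m f Λ) = (∫ a, exp (-f a / Λ) * g a ∂m) / partitionFn m f Λ := by
  have hZ : 0 ≤ partitionFn m f Λ := integral_nonneg fun _ => (exp_pos _).le
  have hρ : Measurable fun a => ENNReal.ofReal (exp (-f a / Λ) / partitionFn m f Λ) := by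
    fun_prop
  rw [gibbsMeasure, integral_withDensity_eq_integral_toReal_smul hρ
    (ae_of_all _ fun _ => ENNReal.ofReal_lt_top), ← integral_div]
  refine integral_congr_ae (ae_of_all _ fun a => ?_)
  dsimp only
  rw [ENNReal.toReal_ofReal (div_nonneg (exp_pos _).le hZ), smul_eq_mul]
  ring

/-- `V(Λ)`; it equals `KL(σ₁ ‖ μ) + KL(σ₂ ‖ ν)` for the marginals `σ₁ = (Z₁ / Z) μ`,
`σ₂ = (Z₂ / Z) ν` of `σ[Λ]`. -/
noncomputable def marginalEntropy {α β : Type*} [MeasurableSpace α] [MeasurableSpace β]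
    (μ : Measure α) (ν : Measure β) (c : α × β → ℝ) (Λ : ℝ) : ℝ :=
  -2 * log (partitionFn (μ.prod ν) c Λ) +
    (1 / partitionFn (μ.prod ν) c Λ) * (∫ x, partitionFn ν (fun y => c (x, y)) Λ *
      log (partitionFn ν (fun y => c (x, y)) Λ) ∂μ) +
    (1 / partitionFn (μ.prod ν) c Λ) * ∫ y, partitionFn μ (fun x => c (x, y)) Λ *
      log (partitionFn μ (fun x => c (x, y)) Λ) ∂ν

section MarginalEntropy

variable {α β : Type*} [MeasurableSpace α] [MeasurableSpace β] {μ : Measure α} {ν : Measure β}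
  [IsProbabilityMeasure μ] [IsProbabilityMeasure ν] {c : α × β → ℝ} {Λ : ℝ}

lemma integral_mul_log_partitionFn_mul (hc : Measurable c) (hc0 : ∀ z, 0 ≤ c z)
    (hci : Integrable c (μ.prod ν)) (hΛ : 0 < Λ) {w : α × β → ℝ} {K : ℝ} (hw : Measurable w)
    (hwK : ∀ z, ‖w z‖ ≤ K) :
    ∫ z, w z * log (partitionFn ν (fun y => c (z.1, y)) Λ *
        partitionFn μ (fun x => c (x, z.2)) Λ) ∂(μ.prod ν) =
      ∫ z, w z * log (partitionFn ν (fun y => c (z.1, y)) Λ) ∂(μ.prod ν) +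
        ∫ z, w z * log (partitionFn μ (fun x => c (x, z.2)) Λ) ∂(μ.prod ν) := by
  rw [← integral_add (integrable_mul_log_partitionFn_fst hc hc0 hci hΛ hw hwK)
    (integrable_mul_log_partitionFn_snd hc hc0 hci hΛ hw hwK)]
  refine integral_congr_ae (ae_of_all _ fun z => ?_)
  dsimp only
  rw [log_mul (partitionFn_pos (f := fun y => c (z.1, y)) (hc.comp measurable_prodMk_left)
    (fun _ => hc0 _) hΛ.le).ne' (partitionFn_pos (f := fun x => c (x, z.2))
    (hc.comp measurable_prodMk_right) (fun _ => hc0 _) hΛ.le).ne', mul_add]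

lemma integral_log_partitionFn_mul_gibbsMeasure (hc : Measurable c) (hc0 : ∀ z, 0 ≤ c z)
    (hci : Integrable c (μ.prod ν)) (hΛ : 0 < Λ) :
    ∫ z, log (partitionFn ν (fun y => c (z.1, y)) Λ * partitionFn μ (fun x => c (x, z.2)) Λ)
        ∂(gibbsMeasure (μ.prod ν) c Λ) =
      ((∫ x, partitionFn ν (fun y => c (x, y)) Λ * log (partitionFn ν (fun y => c (x, y)) Λ) ∂μ) +
        ∫ y, partitionFn μ (fun x => c (x, y)) Λ * log (partitionFn μ (fun x => c (x, y)) Λ) ∂ν) /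
        partitionFn (μ.prod ν) c Λ := by
  rw [integral_gibbsMeasure hc, integral_mul_log_partitionFn_mul hc hc0 hci hΛ
    (w := fun z => exp (-c z / Λ)) (hc.neg.div_const Λ).exp (K := 1)
      fun z => norm_exp_neg_div_le_one (hc0 z) hΛ.le,
    integral_partitionFn_mul_log_eq hc hc0 hci hΛ,
    integral_partitionFn_mul_log_eq_snd hc hc0 hci hΛ]

theorem marginalEntropy_eq_integral_log (hc : Measurable c) (hc0 : ∀ z, 0 ≤ c z)
    (hci : Integrable c (μ.prod ν)) (hΛ : 0 < Λ) :
    marginalEntropy μ ν c Λ = -2 * log (partitionFn (μ.prod ν) c Λ) +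
      ∫ z, log (partitionFn ν (fun y => c (z.1, y)) Λ * partitionFn μ (fun x => c (x, z.2)) Λ)
        ∂(gibbsMeasure (μ.prod ν) c Λ) := by
  rw [marginalEntropy, integral_log_partitionFn_mul_gibbsMeasure hc hc0 hci hΛ]
  ring

theorem hasDerivAt_marginalEntropy (hc : Measurable c) (hc0 : ∀ z, 0 ≤ c z)
    (hci : Integrable c (μ.prod ν)) (hΛ : 0 < Λ) :
    HasDerivAt (marginalEntropy μ ν c) (1 / Λ ^ 2 *
      ((∫ z, c z * log (partitionFn ν (fun y => c (z.1, y)) Λ *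
          partitionFn μ (fun x => c (x, z.2)) Λ) ∂(gibbsMeasure (μ.prod ν) c Λ)) -
        (∫ z, c z ∂(gibbsMeasure (μ.prod ν) c Λ)) *
          ∫ z, log (partitionFn ν (fun y => c (z.1, y)) Λ *
            partitionFn μ (fun x => c (x, z.2)) Λ) ∂(gibbsMeasure (μ.prod ν) c Λ))) Λ := by
  have hZ := hasDerivAt_partitionFn hc hc0 hci hΛ
  have hZ0 := (partitionFn_pos (m := μ.prod ν) hc hc0 hΛ.le).ne'
  have hG₁ := hasDerivAt_integral_partitionFn_mul_log hc hc0 hci hΛ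
  have hG₂ := hasDerivAt_integral_partitionFn_mul_log_snd hc hc0 hci hΛ
  have hcE : ∫ z, exp (-c z / Λ) * (c z * log (partitionFn ν (fun y => c (z.1, y)) Λ *
      partitionFn μ (fun x => c (x, z.2)) Λ)) ∂(μ.prod ν) =
      ∫ z, c z * exp (-c z / Λ) * log (partitionFn ν (fun y => c (z.1, y)) Λ) ∂(μ.prod ν) +
        ∫ z, c z * exp (-c z / Λ) * log (partitionFn μ (fun x => c (x, z.2)) Λ) ∂(μ.prod ν) := by
    rw [← integral_mul_log_partitionFn_mul hc hc0 hci hΛ (w := fun z => c z * exp (-c z / Λ))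
      (hc.mul (hc.neg.div_const Λ).exp) fun z => norm_mul_exp_neg_div_le (hc0 z) hΛ]
    congr 1; ext z; ring
  refine (((hZ.log hZ0).const_mul (-2)).add (((hasDerivAt_const Λ 1).div hZ hZ0).mul hG₁) |>.add
    (((hasDerivAt_const Λ 1).div hZ hZ0).mul hG₂)).congr_deriv ?_
  have hA : ∫ z, exp (-c z / Λ) * c z ∂(μ.prod ν) = ∫ z, c z * exp (-c z / Λ) ∂(μ.prod ν) := by
    simp_rw [mul_comm]
  rw [integral_log_partitionFn_mul_gibbsMeasure hc hc0 hci hΛ, integral_gibbsMeasure hc,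
    integral_gibbsMeasure hc, hcE, hA, Pi.div_apply]
  field_simp
  ring

end MarginalEntropy

/-- With `σ[Λ] = (1/Z[Λ]) e^{-c/Λ} μ ⊗ ν`, one has
`V(Λ) = -2 log Z[Λ] + E_σ[log(Z₁ Z₂)]` and
`dV/dΛ = (1/Λ²)(E_σ[c log(Z₁Z₂)] - E_σ[c] E_σ[log(Z₁Z₂)])`. -/
theorem stmt_13 {dx dy : ℕ}
    (c : EuclideanSpace ℝ (Fin dx) × EuclideanSpace ℝ (Fin dy) → ℝ)
    (hc_meas : Measurable c) (hc_nonneg : ∀ z, 0 ≤ c z)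
    (μ : Measure (EuclideanSpace ℝ (Fin dx))) (ν : Measure (EuclideanSpace ℝ (Fin dy)))
    [IsProbabilityMeasure μ] [IsProbabilityMeasure ν]
    (hint : Integrable c (μ.prod ν))
    (Z : ℝ → ℝ) (Z₁ : ℝ → EuclideanSpace ℝ (Fin dx) → ℝ)
    (Z₂ : ℝ → EuclideanSpace ℝ (Fin dy) → ℝ)
    (hZ : ∀ Λ > (0:ℝ), Z Λ = ∫ z, Real.exp (-c z / Λ) ∂(μ.prod ν))
    (hZ₁ : ∀ Λ > (0:ℝ), ∀ x, Z₁ Λ x = ∫ y, Real.exp (-c (x, y) / Λ) ∂ν)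
    (hZ₂ : ∀ Λ > (0:ℝ), ∀ y, Z₂ Λ y = ∫ x, Real.exp (-c (x, y) / Λ) ∂μ)
    (V : ℝ → ℝ)
    (hV : ∀ Λ > (0:ℝ), V Λ = -2 * Real.log (Z Λ) +
      (1 / Z Λ) * (∫ x, Z₁ Λ x * Real.log (Z₁ Λ x) ∂μ) +
      (1 / Z Λ) * ∫ y, Z₂ Λ y * Real.log (Z₂ Λ y) ∂ν)
    (Λ₀ : ℝ) (hΛ₀ : 0 < Λ₀)
    (σ : Measure (EuclideanSpace ℝ (Fin dx) × EuclideanSpace ℝ (Fin dy)))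
    (hσ : σ = (μ.prod ν).withDensity
      (fun z => ENNReal.ofReal (Real.exp (-c z / Λ₀) / Z Λ₀))) :
    V Λ₀ = -2 * Real.log (Z Λ₀) + (∫ z, Real.log (Z₁ Λ₀ z.1 * Z₂ Λ₀ z.2) ∂σ) ∧
    HasDerivAt V ((1 / Λ₀ ^ 2) *
      ((∫ z, c z * Real.log (Z₁ Λ₀ z.1 * Z₂ Λ₀ z.2) ∂σ) -
        (∫ z, c z ∂σ) * ∫ z, Real.log (Z₁ Λ₀ z.1 * Z₂ Λ₀ z.2) ∂σ)) Λ₀ := by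
  have hV_eq : V =ᶠ[𝓝 Λ₀] marginalEntropy μ ν c := by
    filter_upwards [Ioi_mem_nhds hΛ₀] with Λ hΛ
    simp only [hV Λ hΛ, hZ Λ hΛ, hZ₁ Λ hΛ, hZ₂ Λ hΛ]
    rfl
  have hZ₀ : Z Λ₀ = partitionFn (μ.prod ν) c Λ₀ := hZ Λ₀ hΛ₀
  have hZ₁₀ : Z₁ Λ₀ = fun x => partitionFn ν (fun y => c (x, y)) Λ₀ := funext (hZ₁ Λ₀ hΛ₀)
  have hZ₂₀ : Z₂ Λ₀ = fun y => partitionFn μ (fun x => c (x, y)) Λ₀ := funext (hZ₂ Λ₀ hΛ₀)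
  subst hσ
  rw [hZ₀, hZ₁₀, hZ₂₀, hV_eq.eq_of_nhds]
  exact ⟨marginalEntropy_eq_integral_log hc_meas hc_nonneg hint hΛ₀,
    (hasDerivAt_marginalEntropy hc_meas hc_nonneg hint hΛ₀).congr_of_eventuallyEq hV_eq⟩
end
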